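/- Let (A, R) be a Rota-Baxter algebra of weight zero and define ω₁(x,y,z) = R(x)·y·R(z), ω₂(x,y,z) = x·R(y·R(z)), ω₅(x,y,z) = R(x·R(y))·z. Then for all v, w, x, y, z ∈ A one has ω₅(ω₅(v,w,x), y, z) + ω₅(v, ω₁(w,x,y), z) + ω₅(v, ω₂(w,x,y), z) = ω₅(v, w, ω₅(x,y,z)). -/
import Mathlib


theorem STMT {A : Type*} [NonUnitalRing A] [Module ℚ A]
    [SMulCommClass ℚ A A] [IsScalarTower ℚ A A]
    (R : A →ₗ[ℚ] A)
    (hR : ∀ x y : A, R x * R y = R (R x * y) + R (x * R y)) :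
    ∀ v w x y z : A,
      (fun x y z : A => R (x * R y) * z) ((fun x y z : A => R (x * R y) * z) v w x) y z + (fun x y z : A => R (x * R y) * z) v ((fun x y z : A => R x * y * R z) w x y) z + (fun x y z : A => R (x * R y) * z) v ((fun x y z : A => x * R (y * R z)) w x y) z = (fun x y z : A => R (x * R y) * z) v w ((fun x y z : A => R (x * R y) * z) x y z) := by
  intro v w x y z
  simp only
  rw [← mul_assoc (R (v * R w)), hR, mul_assoc v (R w), hR w, mul_add, map_add,
    add_mul, mul_assoc (R (v * R w)) x (R y), mul_assoc (R w) x (R y), add_assoc, add_mul]
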